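/- arXiv:2005.11766 — 3 statements merged into one kernel-verified Lean document; each statement's English description precedes it below -/
import Mathlib

section
/- Every finite distance-hereditary graph with at least two vertices has either a pendant vertex or two distinct vertices that are twins. -/
open Set

universe u v

variable {Ω : Type*}

/-- The diagonal relation `1_Δ` of a set `Δ ⊆ Ω`. -/
def diagRel (Δ : Set Ω) : Set (Ω × Ω) := {p | p.1 = p.2 ∧ p.1 ∈ Δ}

/-- The number of points `γ` with `(p.1, γ) ∈ r` and `(γ, p.2) ∈ s`. -/
noncomputable def interNum (r s : Set (Ω × Ω)) (p : Ω × Ω) : ℕ :=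
  {γ : Ω | (p.1, γ) ∈ r ∧ (γ, p.2) ∈ s}.ncard

/-- A coherent configuration on `Ω`: a partition `S` of `Ω × Ω` such that the diagonal
is a union of classes, `S` is closed under transposition, and the intersection numbers
are well defined. -/
structure CoherentConfiguration (Ω : Type u) where
  S : Set (Set (Ω × Ω))
  isPartition : Setoid.IsPartition S
  diag_isRelation : ∃ T ⊆ S, ⋃₀ T = diagRel (Set.univ : Set Ω)
  swap_mem : ∀ s ∈ S, {p : Ω × Ω | (p.2, p.1) ∈ s} ∈ S
  coherent : ∀ r ∈ S, ∀ s ∈ S, ∀ t ∈ S, ∀ p ∈ t, ∀ q ∈ t,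
    interNum r s p = interNum r s q

namespace CoherentConfiguration

/-- A relation of `X` is a union of basis relations of `X`. -/
def IsRelation (X : CoherentConfiguration Ω) (r : Set (Ω × Ω)) : Prop :=
  ∃ T ⊆ X.S, ⋃₀ T = r

/-- A fiber of `X` is a set `Δ` with `1_Δ` a basis relation. -/
def IsFiber (X : CoherentConfiguration Ω) (Δ : Set Ω) : Prop :=
  diagRel Δ ∈ X.S

end CoherentConfiguration

/-- `X ≤ Y` iff every relation of `X` is a relation of `Y`. -/
def CCle (X Y : CoherentConfiguration Ω) : Prop :=
  ∀ r, X.IsRelation r → Y.IsRelation r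

/-- The arc set of a graph, as a set of ordered pairs. -/
def adjRel (G : SimpleGraph Ω) : Set (Ω × Ω) := {p | G.Adj p.1 p.2}

/-- `X = WL(G)`: the smallest coherent configuration having the arc set of `G`
among its relations. -/
def IsWL (G : SimpleGraph Ω) (X : CoherentConfiguration Ω) : Prop :=
  X.IsRelation (adjRel G) ∧
    ∀ Y : CoherentConfiguration Ω, Y.IsRelation (adjRel G) → CCle X Y

/-- `X = WL(G)_π`: the smallest coherent configuration having the arc set of `G`
and every `1_Δ`, `Δ ∈ π`, among its relations. -/
def IsWLPart (G : SimpleGraph Ω) (π : Set (Set Ω)) (X : CoherentConfiguration Ω) : Prop :=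
  X.IsRelation (adjRel G) ∧ (∀ Δ ∈ π, X.IsRelation (diagRel Δ)) ∧
    ∀ Y : CoherentConfiguration Ω, Y.IsRelation (adjRel G) →
      (∀ Δ ∈ π, Y.IsRelation (diagRel Δ)) → CCle X Y

/-- A graph is distance-hereditary if in every connected induced subgraph the distance
function is the same as in the graph itself. -/
def DistanceHereditary {V : Type*} (G : SimpleGraph V) : Prop :=
  ∀ s : Set V, (G.induce s).Connected →
    ∀ u v : s, (G.induce s).dist u v = G.dist u.1 v.1

/-- Two vertices are twins in a graph if every other vertex is adjacent to both
or to neither. -/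
def IsTwin (G : SimpleGraph Ω) (a b : Ω) : Prop :=
  ∀ γ, γ ≠ a → γ ≠ b → (G.Adj γ a ↔ G.Adj γ b)

/-- Two points are `X`-twins if for every other point `γ`, the basis relation containing
`(γ, a)` coincides with the one containing `(γ, b)`. -/
def XTwin (X : CoherentConfiguration Ω) (a b : Ω) : Prop :=
  ∀ γ, γ ≠ a → γ ≠ b → ∀ s ∈ X.S, ((γ, a) ∈ s ↔ (γ, b) ∈ s)

/-- The relation `e_X` of being `X`-twins, as a set of pairs. -/
def twinRel (X : CoherentConfiguration Ω) : Set (Ω × Ω) := {p | XTwin X p.1 p.2}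

/-- An equivalence relation on `Ω`, given as a set of pairs. -/
def IsEquivSet (e : Set (Ω × Ω)) : Prop :=
  (∀ a, (a, a) ∈ e) ∧ (∀ a b, (a, b) ∈ e → (b, a) ∈ e) ∧
    (∀ a b c, (a, b) ∈ e → (b, c) ∈ e → (a, c) ∈ e)

/-- A parabolic of `X` is an equivalence relation which is a relation of `X`. -/
def IsParabolic (X : CoherentConfiguration Ω) (e : Set (Ω × Ω)) : Prop :=
  IsEquivSet e ∧ X.IsRelation e

/-- The dot product (composition) of two relations. -/
def relComp (r s : Set (Ω × Ω)) : Set (Ω × Ω) :=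
  {p | ∃ c, (p.1, c) ∈ r ∧ (c, p.2) ∈ s}

/-- An algebraic isomorphism between coherent configurations: a bijection between the
sets of basis relations preserving the intersection numbers. -/
structure AlgIso {Ω : Type u} {Ω' : Type v} (X : CoherentConfiguration Ω)
    (X' : CoherentConfiguration Ω') where
  toFun : Set (Ω × Ω) → Set (Ω' × Ω')
  bijOn : Set.BijOn toFun X.S X'.S
  card_eq : ∀ r ∈ X.S, ∀ s ∈ X.S, ∀ t ∈ X.S, ∀ p ∈ t, ∀ p' ∈ toFun t,
      interNum r s p = interNum (toFun r) (toFun s) p'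

/-- `X` is separable: every algebraic isomorphism from `X` to another coherent
configuration is induced by a bijection of the point sets. -/
def CCSeparable {Ω : Type u} (X : CoherentConfiguration Ω) : Prop :=
  ∀ (Ω' : Type u), Finite Ω' → ∀ (X' : CoherentConfiguration Ω') (φ : AlgIso X X'),
    ∃ f : Ω → Ω', Function.Bijective f ∧ ∀ s ∈ X.S, φ.toFun s = Prod.map f f '' s

/-- `Ω₋(m)`. -/
def OmegaMinus (m : Set (Ω × Ω)) : Set Ω := {a | ∃ b, (a, b) ∈ m}

/-- `Ω₊(m)`. -/
def OmegaPlus (m : Set (Ω × Ω)) : Set Ω := {b | ∃ a, (a, b) ∈ m}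

/-- A matching of `X`: an irreflexive basis relation of valency one in both directions. -/
def IsMatchingCC (X : CoherentConfiguration Ω) (m : Set (Ω × Ω)) : Prop :=
  m ∈ X.S ∧ (∀ p ∈ m, p.1 ≠ p.2) ∧
    (∀ a b c, (a, b) ∈ m → (a, c) ∈ m → b = c) ∧
    (∀ a b c, (a, c) ∈ m → (b, c) ∈ m → a = b)

/-- A pendant matching of `X` with respect to the graph `G`. -/
def IsPendantMatching (G : SimpleGraph Ω) (X : CoherentConfiguration Ω)
    (m : Set (Ω × Ω)) : Prop :=
  IsMatchingCC X m ∧ OmegaMinus m ≠ OmegaPlus m ∧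
    ∀ p ∈ m, G.Adj p.1 p.2 ∧ ∀ c, G.Adj p.1 c → c = p.2

/-- A twin matching of `X` with respect to the graph `G`. -/
def IsTwinMatching (G : SimpleGraph Ω) (X : CoherentConfiguration Ω)
    (m : Set (Ω × Ω)) : Prop :=
  IsMatchingCC X m ∧ OmegaMinus m ≠ OmegaPlus m ∧ ∀ p ∈ m, IsTwin G p.1 p.2

/-- The quotient graph of `G` modulo a (twin) equivalence relation `r`: two distinct
classes are adjacent iff every vertex of one is adjacent to every vertex of the other. -/
def quotGraph (G : SimpleGraph Ω) (r : Ω → Ω → Prop) : SimpleGraph (Quot r) where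
  Adj c d := c ≠ d ∧ ∀ a b : Ω, Quot.mk r a = c → Quot.mk r b = d → G.Adj a b
  symm := ⟨fun _ _ h => ⟨h.1.symm, fun a b ha hb => (h.2 b a hb ha).symm⟩⟩
  loopless := ⟨fun _ h => h.1 rfl⟩

/-- The restriction of a relation on `Ω` to the complement of `Δ`. -/
def restrictRel (Δ : Set Ω) (s : Set (Ω × Ω)) : Set (↥(Δᶜ) × ↥(Δᶜ)) :=
  {p | ((p.1 : Ω), (p.2 : Ω)) ∈ s}

/-- The restriction of a subset of `Ω` to the complement of `Δ`. -/
def restrictSet (Δ Γ : Set Ω) : Set ↥(Δᶜ) := {x | (x : Ω) ∈ Γ}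

/-!
Fix a vertex `u` that has a neighbour, layer the vertices by their distance from `u`, and let
`k + 1` be the largest distance. Distance-heredity enters through one consequence: if `w` is the
only neighbour of `u` on a walk from `w` to `v`, then `d(u, v) = d(w, v) + 1`, since the subgraph
induced on that walk is connected and a shortest path inside it leaves `u` through `w`. Hence two
vertices of a layer that are adjacent, or have a common neighbour in the same or a higher layer,
have the same neighbours in the layer below, and no induced path on four or five vertices has its
ends at distance at most two.

A finite P4-free graph on at least two vertices has twins: by Seinsche's theorem it or its
complement is disconnected, and twins of a part with at least two vertices are twins of the whole.

If the top layer contains an edge `y z`, the top vertices with the same lower neighbours as `y`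
form a P4-free set containing `z`, and no vertex outside it distinguishes two of its members.
Otherwise take a top vertex `x` whose neighbourhood is inclusion-minimal among top vertices. If
`x` is not pendant, its neighbourhood is a P4-free set of at least two vertices, and a vertex
distinguishing two of them would create one of the forbidden induced paths.
-/

namespace SimpleGraph

variable {G : SimpleGraph Ω}

theorem Adj.dist_le_add_one {v w : Ω} (h : G.Adj v w) (u : Ω) :
    G.dist u w ≤ G.dist u v + 1 := by
  rcases h.diff_dist_adj (u := u) with h | h | h <;> omega

theorem Adj.dist_eq_or_of_forall_dist_le {u a γ : Ω} {k : ℕ}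
    (h : G.Adj a γ) (hmax : ∀ w, G.dist u w ≤ k + 1) (ha : G.dist u a = k + 1) :
    G.dist u γ = k ∨ G.dist u γ = k + 1 := by
  have := hmax γ
  rcases h.diff_dist_adj (u := u) with h | h | h <;> omega

theorem dist_le_two_of_adj_of_adj {a m d : Ω} (ham : G.Adj a m) (hmd : G.Adj m d) :
    G.dist a d ≤ 2 :=
  G.dist_le (ham.toWalk.concat hmd)

theorem Walk.dist_lt_of_mem_support {u c z : Ω} (g : G.Walk u c)
    (hg : g.length = G.dist u c) (hz : z ∈ g.support) (hzc : z ≠ c) :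
    G.dist u z < G.dist u c := by
  classical
  have hlen := congrArg Walk.length (g.take_spec hz)
  rw [Walk.length_append] at hlen
  have hdrop : (g.dropUntil z hz).length ≠ 0 := fun h => hzc (Walk.eq_of_length_eq_zero h)
  have := G.dist_le (g.takeUntil z hz)
  omega

/-- `c` is a lower neighbour of `v` in the breadth-first layering of `G` from `u`. -/
def IsLowerNeighbor (G : SimpleGraph Ω) (u c v : Ω) : Prop :=
  G.Adj c v ∧ G.dist u c + 1 = G.dist u v

theorem exists_isLowerNeighbor {u v : Ω} (h : G.dist u v ≠ 0) : ∃ c, G.IsLowerNeighbor u c v := by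
  obtain ⟨g, hg⟩ := (Reachable.of_dist_ne_zero h).symm.exists_walk_length_eq_dist
  cases g with
  | nil => simp at h
  | cons hvc g =>
    refine ⟨_, hvc.symm, le_antisymm ?_ (hvc.symm.dist_le_add_one u)⟩
    have := G.dist_le g.reverse
    rw [Walk.length_reverse] at this
    rw [Walk.length_cons, dist_comm] at hg
    omega

def IsInducedP4 (G : SimpleGraph Ω) (a b c d : Ω) : Prop :=
  G.Adj a b ∧ G.Adj b c ∧ G.Adj c d ∧ ¬G.Adj a c ∧ ¬G.Adj a d ∧ ¬G.Adj b d

theorem IsInducedP4.compl {a b c d : Ω} (h : G.IsInducedP4 a b c d) : Gᶜ.IsInducedP4 c a d b := by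
  obtain ⟨hab, hbc, hcd, hac, had, hbd⟩ := h
  have hac' : a ≠ c := by rintro rfl; exact had hcd
  have had' : a ≠ d := by rintro rfl; exact hac hcd.symm
  have hbd' : b ≠ d := by rintro rfl; exact had hab
  simp only [IsInducedP4, compl_adj, not_and, not_not]
  exact ⟨⟨hac'.symm, fun h => hac h.symm⟩, ⟨had', had⟩, ⟨hbd'.symm, fun h => hbd h.symm⟩,
    fun _ => hcd, fun _ => hbc.symm, fun _ => hab⟩

def P4FreeOn (G : SimpleGraph Ω) (s : Finset Ω) : Prop :=
  ∀ a ∈ s, ∀ b ∈ s, ∀ c ∈ s, ∀ d ∈ s, ¬G.IsInducedP4 a b c d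

theorem P4FreeOn.mono {s t : Finset Ω} (h : G.P4FreeOn s) (hts : t ⊆ s) : G.P4FreeOn t :=
  fun a ha b hb c hc d hd => h a (hts ha) b (hts hb) c (hts hc) d (hts hd)

theorem P4FreeOn.compl {s : Finset Ω} (h : G.P4FreeOn s) : Gᶜ.P4FreeOn s := by
  intro a ha b hb c hc d hd hP4
  exact h c hc a ha d hd b hb (by simpa using hP4.compl)

def HasTwinsOn (G : SimpleGraph Ω) (s : Finset Ω) : Prop :=
  ∃ a ∈ s, ∃ b ∈ s, a ≠ b ∧ ∀ γ ∈ s, γ ≠ a → γ ≠ b → (G.Adj γ a ↔ G.Adj γ b)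

theorem HasTwinsOn.of_compl {s : Finset Ω} (h : Gᶜ.HasTwinsOn s) : G.HasTwinsOn s := by
  obtain ⟨a, ha, b, hb, hab, htw⟩ := h
  refine ⟨a, ha, b, hb, hab, fun γ hγ hγa hγb => ?_⟩
  simpa [hγa, hγb, not_iff_not] using htw γ hγ hγa hγb

theorem HasTwinsOn.of_subset {s t : Finset Ω} (h : G.HasTwinsOn t) (hts : t ⊆ s)
    (hsep : ∀ a ∈ t, ∀ b ∈ s, b ∉ t → ¬G.Adj a b) : G.HasTwinsOn s := by
  obtain ⟨a, ha, b, hb, hab, htw⟩ := h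
  refine ⟨a, hts ha, b, hts hb, hab, fun γ hγ hγa hγb => ?_⟩
  by_cases hγt : γ ∈ t
  · exact htw γ hγt hγa hγb
  · exact iff_of_false (fun h => hsep a ha γ hγ hγt h.symm) (fun h => hsep b hb γ hγ hγt h.symm)

variable [DecidableEq Ω]

def IsDisconnectedOn (G : SimpleGraph Ω) (s : Finset Ω) : Prop :=
  ∃ A ⊆ s, A.Nonempty ∧ (s \ A).Nonempty ∧ ∀ a ∈ A, ∀ b ∈ s \ A, ¬G.Adj a b

theorem exists_adj_of_not_isDisconnectedOn {s A : Finset Ω} (h : ¬G.IsDisconnectedOn s)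
    (hAs : A ⊆ s) (hA : A.Nonempty) (hsA : (s \ A).Nonempty) :
    ∃ a ∈ A, ∃ b ∈ s \ A, G.Adj a b := by
  by_contra! hno
  exact h ⟨A, hAs, hA, hsA, hno⟩

theorem isDisconnectedOn_insert {v : Ω} {t : Finset Ω} (hv : v ∉ t) (ht : t.Nonempty)
    (h : ∀ w ∈ t, ¬G.Adj v w) : G.IsDisconnectedOn (insert v t) := by
  have hsd : insert v t \ {v} = t := by grind
  refine ⟨{v}, by simp, by simp, by rwa [hsd], ?_⟩
  rw [hsd]
  simpa using h

/-- Connectivity of `G[insert v t]` provides a neighbour `z` of `v` outside `A` and an edge `x y`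
in `A` with `x ~ v`, `y ≁ v`; then `z - v - x - y` is an induced path. -/
theorem not_p4FreeOn_insert {v w : Ω} {t A : Finset Ω} (hv : v ∉ t) (hAt : A ⊆ t)
    (hsep : ∀ a ∈ A, ∀ b ∈ t \ A, ¬G.Adj a b) (htA : (t \ A).Nonempty) (hwA : w ∈ A)
    (hvw : ¬G.Adj v w) (hconn : ¬G.IsDisconnectedOn (insert v t)) :
    ¬G.P4FreeOn (insert v t) := by
  classical
  obtain ⟨z, hz, v', hv', hzv'⟩ := exists_adj_of_not_isDisconnectedOn hconn
    (Finset.sdiff_subset.trans (Finset.subset_insert v t)) htA ⟨v, by simp [hv]⟩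
  have hv'v : v' = v := by
    by_contra hne
    simp only [Finset.mem_sdiff, Finset.mem_insert, hne, false_or, not_and, not_not] at hv'
    exact hsep v' (hv'.2 hv'.1) z hz hzv'.symm
  have hzv : G.Adj z v := hv'v ▸ hzv'
  obtain ⟨y, hy, x, hx, hyx⟩ := exists_adj_of_not_isDisconnectedOn hconn
    ((A.filter_subset (¬G.Adj v ·)).trans (hAt.trans (Finset.subset_insert v t)))
    ⟨w, by simp [hwA, hvw]⟩ ⟨v, by simp [show v ∉ A from fun h => hv (hAt h)]⟩
  simp only [Finset.mem_filter] at hy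
  have hxA : x ∈ A ∧ G.Adj v x := by
    simp only [Finset.mem_sdiff, Finset.mem_insert, Finset.mem_filter, not_and, not_not] at hx
    rcases hx.1 with rfl | hxt
    · exact absurd hyx.symm hy.2
    · by_contra! hxA
      by_cases hx' : x ∈ A
      · exact hxA hx' (hx.2 hx')
      · exact hsep y hy.1 x (Finset.mem_sdiff.2 ⟨hxt, hx'⟩) hyx
  have hzt : z ∈ t := (Finset.mem_sdiff.1 hz).1
  intro hP4
  exact hP4 z (by simp [hzt]) v (by simp) x (by simp [hAt hxA.1]) y (by simp [hAt hy.1])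
    ⟨hzv, hxA.2, hyx.symm, fun h => hsep x hxA.1 z hz h.symm,
      fun h => hsep y hy.1 z hz h.symm, hy.2⟩

theorem isDisconnectedOn_or_compl_insert {v : Ω} {t : Finset Ω} (hv : v ∉ t)
    (hP4 : G.P4FreeOn (insert v t)) (ht : G.IsDisconnectedOn t) :
    G.IsDisconnectedOn (insert v t) ∨ Gᶜ.IsDisconnectedOn (insert v t) := by
  rw [or_iff_not_imp_left]
  intro hconn
  obtain ⟨A, hAt, hA, htA, hsep⟩ := ht
  by_cases hall : ∀ w ∈ t, G.Adj v w
  · exact isDisconnectedOn_insert hv (hA.mono hAt) fun w hw => by simp [hall w hw]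
  push Not at hall
  obtain ⟨w, hwt, hvw⟩ := hall
  exfalso
  by_cases hwA : w ∈ A
  · exact not_p4FreeOn_insert hv hAt hsep htA hwA hvw hconn hP4
  · refine not_p4FreeOn_insert hv Finset.sdiff_subset ?_ ?_ (Finset.mem_sdiff.2 ⟨hwt, hwA⟩) hvw
      hconn hP4
    · rw [Finset.sdiff_sdiff_eq_self hAt]
      exact fun a ha b hb hab => hsep b hb a ha hab.symm
    · rwa [Finset.sdiff_sdiff_eq_self hAt]

theorem P4FreeOn.isDisconnectedOn_or_compl {s : Finset Ω} (hP4 : G.P4FreeOn s)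
    (hs : 2 ≤ s.card) : G.IsDisconnectedOn s ∨ Gᶜ.IsDisconnectedOn s := by
  induction s using Finset.induction_on with
  | empty => simp at hs
  | @insert v t hv ih =>
    rw [Finset.card_insert_of_notMem hv] at hs
    by_cases ht : 2 ≤ t.card
    · rcases ih (hP4.mono (Finset.subset_insert v t)) ht with h | h
      · exact isDisconnectedOn_or_compl_insert hv hP4 h
      · simpa [or_comm] using isDisconnectedOn_or_compl_insert hv hP4.compl h
    obtain ⟨w, rfl⟩ := Finset.card_eq_one.1 (by omega : t.card = 1)
    by_cases hvw : G.Adj v w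
    · exact Or.inr (isDisconnectedOn_insert hv (by simp) (by simp [hvw]))
    · exact Or.inl (isDisconnectedOn_insert hv (by simp) (by simp [hvw]))

theorem hasTwinsOn_pair {a b : Ω} (hab : a ≠ b) : G.HasTwinsOn {a, b} :=
  ⟨a, by simp, b, by simp, hab, by simp +contextual⟩

theorem IsDisconnectedOn.hasTwinsOn {s : Finset Ω} (h : G.IsDisconnectedOn s) (hs : 2 ≤ s.card)
    (ih : ∀ t ⊂ s, 2 ≤ t.card → G.HasTwinsOn t) : G.HasTwinsOn s := by
  obtain ⟨A, hAs, hA, hsA, hsep⟩ := h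
  by_cases hA2 : 2 ≤ A.card
  · refine (ih A (Finset.ssubset_iff_subset_ne.2 ⟨hAs, ?_⟩) hA2).of_subset hAs
      fun a ha b hb hbA => hsep a ha b (Finset.mem_sdiff.2 ⟨hb, hbA⟩)
    rintro rfl
    simp at hsA
  by_cases hsA2 : 2 ≤ (s \ A).card
  · refine (ih (s \ A) (Finset.sdiff_ssubset hAs hA) hsA2).of_subset Finset.sdiff_subset
      fun a ha b hb hbA => fun hab => hsep b ?_ a ha hab.symm
    simpa [hb] using hbA
  have hcard := Finset.card_sdiff_add_card_eq_card hAs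
  obtain ⟨a, b, hab, rfl⟩ := Finset.card_eq_two.1 (by
    have := hA.card_pos; have := hsA.card_pos; omega : s.card = 2)
  exact hasTwinsOn_pair hab

theorem P4FreeOn.hasTwinsOn {s : Finset Ω} (hP4 : G.P4FreeOn s) (hs : 2 ≤ s.card) :
    G.HasTwinsOn s := by
  induction s using Finset.strongInduction generalizing G with
  | H s ih =>
    rcases hP4.isDisconnectedOn_or_compl hs with h | h
    · exact h.hasTwinsOn hs fun t hts ht => ih t hts (hP4.mono hts.subset) ht
    · exact (h.hasTwinsOn hs fun t hts ht => ih t hts (hP4.compl.mono hts.subset) ht).of_compl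

end SimpleGraph

namespace DistanceHereditary

open SimpleGraph

variable {G : SimpleGraph Ω}

theorem dist_eq_dist_add_one_of_unique_adj (hDH : DistanceHereditary G) {u w v : Ω}
    (huw : G.Adj u w) (p : G.Walk w v) (hu : ∀ z ∈ p.support, G.Adj u z → z = w) (huv : u ≠ v) :
    G.dist u v = G.dist w v + 1 := by
  set s : Set Ω := {z | z ∈ (Walk.cons huw p).support}
  have hconn : (G.induce s).Connected := (Walk.cons huw p).connected_induce_support
  have hus : u ∈ s := (Walk.cons huw p).start_mem_support
  have hvs : v ∈ s := (Walk.cons huw p).end_mem_support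
  obtain ⟨W, hW⟩ := (hconn.preconnected ⟨u, hus⟩ ⟨v, hvs⟩).exists_walk_length_eq_dist
  rw [hDH s hconn] at hW
  refine le_antisymm ?_ ?_
  · have := p.reachable.dist_triangle_right u
    rw [dist_eq_one_iff_adj.mpr huw] at this
    omega
  cases W with
  | nil => exact absurd rfl huv
  | cons hz W' =>
    rename_i z
    have hzw : z.1 = w := by
      have hzs : z.1 ∈ s := z.2
      simp only [s, Set.mem_ofPred_eq, Walk.support_cons, List.mem_cons] at hzs
      exact hu _ (hzs.resolve_left (G.ne_of_adj hz).symm) hz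
    have := G.dist_le (W'.map (Embedding.induce s).toHom)
    change G.dist z.1 v ≤ _ at this
    rw [Walk.length_map, hzw] at this
    rw [Walk.length_cons] at hW
    change _ = G.dist u v at hW
    omega

theorem dist_eq_three (hDH : DistanceHereditary G) {a b c d : Ω}
    (h : G.IsInducedP4 a b c d) : G.dist a d = 3 := by
  obtain ⟨hab, hbc, hcd, hac, had, hbd⟩ := h
  have hbd2 : G.dist b d = 2 := by
    rw [hDH.dist_eq_dist_add_one_of_unique_adj hbc hcd.toWalk (by simp_all)
      (by rintro rfl; exact had hab), dist_eq_one_iff_adj.mpr hcd]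
  rw [hDH.dist_eq_dist_add_one_of_unique_adj hab (hbc.toWalk.concat hcd) (by simp_all)
    (by rintro rfl; exact hac hcd.symm), hbd2]

theorem not_isInducedP4 (hDH : DistanceHereditary G) {a b c d m : Ω} (ham : G.Adj a m)
    (hmd : G.Adj m d) : ¬G.IsInducedP4 a b c d := fun h => by
  have := hDH.dist_eq_three h
  have := dist_le_two_of_adj_of_adj ham hmd
  omega

theorem adj_of_walk (hDH : DistanceHereditary G) {u v w c : Ω}
    (hvw : G.Adj v w) (q : G.Walk w c) (hq : ∀ z ∈ q.support, z ≠ c → G.Adj v z → z = w)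
    (hw : G.dist u v ≤ G.dist u w) (hc : G.dist u c + 1 = G.dist u v) : G.Adj v c := by
  -- otherwise `w` is the only neighbour of `v` on `q` followed by a geodesic from `c` to `u`
  by_contra hvc
  have hrc : G.Reachable u c :=
    (Reachable.of_dist_ne_zero (by omega)).trans (hvw.reachable.trans q.reachable)
  obtain ⟨g, hg⟩ := hrc.exists_walk_length_eq_dist
  have hvu : v ≠ u := by rintro rfl; simp at hc
  have key := hDH.dist_eq_dist_add_one_of_unique_adj hvw (q.append g.reverse) ?_ hvu
  · rw [dist_comm (u := v), dist_comm (u := w)] at key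
    omega
  intro z hz hvz
  have hzc : z ≠ c := by rintro rfl; exact hvc hvz
  rw [Walk.mem_support_append_iff, Walk.support_reverse, List.mem_reverse] at hz
  refine hz.elim (hq z · hzc hvz) fun hz => absurd (g.dist_lt_of_mem_support hg hz hzc) ?_
  have := hvz.symm.dist_le_add_one u
  omega

theorem isLowerNeighbor_of_adj (hDH : DistanceHereditary G) {u v w c : Ω} (hvw : G.Adj v w)
    (hd : G.dist u v = G.dist u w) (hc : G.IsLowerNeighbor u c w) : G.IsLowerNeighbor u c v := by
  refine ⟨(hDH.adj_of_walk hvw hc.1.symm.toWalk ?_ hd.le (hc.2.trans hd.symm)).symm,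
    hc.2.trans hd.symm⟩
  simp +contextual

theorem isLowerNeighbor_of_adj_of_adj (hDH : DistanceHereditary G) {u v w x c : Ω}
    (hxv : G.Adj x v) (hxw : G.Adj x w) (hd : G.dist u v = G.dist u w)
    (hx : G.dist u v ≤ G.dist u x) (hc : G.IsLowerNeighbor u c w) : G.IsLowerNeighbor u c v := by
  by_cases hvw : G.Adj v w
  · exact hDH.isLowerNeighbor_of_adj hvw hd hc
  refine ⟨(hDH.adj_of_walk hxv.symm (hxw.toWalk.concat hc.1.symm) ?_ hx
    (hc.2.trans hd.symm)).symm, hc.2.trans hd.symm⟩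
  simp +contextual [hvw]

theorem exists_isTwin_of_adj_top (hDH : DistanceHereditary G) [Fintype Ω] {u : Ω} {k : ℕ}
    (hmax : ∀ w, G.dist u w ≤ k + 1) {y z : Ω} (hy : G.dist u y = k + 1) (hz : G.dist u z = k + 1)
    (hyz : G.Adj y z) : ∃ a b, a ≠ b ∧ IsTwin G a b := by
  classical
  set C : Finset Ω := Finset.univ.filter fun a =>
    G.dist u a = k + 1 ∧ ∀ c, G.IsLowerNeighbor u c a ↔ G.IsLowerNeighbor u c y
  have hmemC : ∀ a, a ∈ C ↔
      G.dist u a = k + 1 ∧ ∀ c, G.IsLowerNeighbor u c a ↔ G.IsLowerNeighbor u c y := by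
    simp [C]
  have hyC : y ∈ C := (hmemC y).2 ⟨hy, fun _ => Iff.rfl⟩
  have hclosed : ∀ a ∈ C, ∀ γ, G.Adj a γ → G.dist u γ = k + 1 → γ ∈ C := by
    intro a ha γ haγ hγ
    obtain ⟨ha, hlow⟩ := (hmemC a).1 ha
    refine (hmemC γ).2 ⟨hγ, fun c => Iff.trans ⟨fun hc => ?_, fun hc => ?_⟩ (hlow c)⟩
    · exact hDH.isLowerNeighbor_of_adj haγ (ha.trans hγ.symm) hc
    · exact hDH.isLowerNeighbor_of_adj haγ.symm (hγ.trans ha.symm) hc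
  have hP4 : G.P4FreeOn C := by
    intro a ha b _ c _ d hd
    obtain ⟨w, hw⟩ := exists_isLowerNeighbor (u := u) (v := a) (by rw [((hmemC a).1 ha).1]; omega)
    have hwd := ((hmemC d).1 hd).2 w |>.2 (((hmemC a).1 ha).2 w |>.1 hw)
    exact hDH.not_isInducedP4 hw.1.symm hwd.1
  obtain ⟨a, haC, b, hbC, hab, htw⟩ :=
    hP4.hasTwinsOn (Finset.one_lt_card.2 ⟨y, hyC, z, hclosed y hyC z hyz hz, hyz.ne⟩)
  refine ⟨a, b, hab, fun γ hγa hγb => ?_⟩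
  by_cases hγC : γ ∈ C
  · exact htw γ hγC hγa hγb
  have hlevel : ∀ v ∈ C, G.Adj γ v → G.dist u γ = k := fun v hv h =>
    (h.symm.dist_eq_or_of_forall_dist_le hmax ((hmemC v).1 hv).1).resolve_right
      fun hγ => hγC (hclosed v hv γ h.symm hγ)
  by_cases hγ : G.dist u γ = k
  · obtain ⟨ha, hlowa⟩ := (hmemC a).1 haC
    obtain ⟨hb, hlowb⟩ := (hmemC b).1 hbC
    calc G.Adj γ a ↔ G.IsLowerNeighbor u γ a := ⟨fun h => ⟨h, by omega⟩, And.left⟩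
      _ ↔ G.IsLowerNeighbor u γ b := (hlowa γ).trans (hlowb γ).symm
      _ ↔ G.Adj γ b := ⟨And.left, fun h => ⟨h, by omega⟩⟩
  · exact iff_of_false (hγ ∘ hlevel a haC) (hγ ∘ hlevel b hbC)

theorem false_of_crossed_neighbors (hDH : DistanceHereditary G) {u x γ a b e c : Ω}
    (hxγ : ¬G.Adj x γ) (hxa : G.Adj x a) (hγa : G.Adj γ a) (hxb : G.Adj x b) (hγb : ¬G.Adj γ b)
    (hγe : G.Adj γ e) (hxe : ¬G.Adj x e) (hca : G.IsLowerNeighbor u c a)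
    (hcb : G.IsLowerNeighbor u c b) (hce : G.IsLowerNeighbor u c e)
    (hx : G.dist u x = G.dist u a + 1) (hγ : G.dist u γ = G.dist u a + 1) : False := by
  have hcx : ¬G.Adj c x := fun h => by have := h.dist_le_add_one u; have := hca.2; omega
  have hcγ : ¬G.Adj c γ := fun h => by have := h.dist_le_add_one u; have := hca.2; omega
  by_cases hbe : G.Adj b e
  · exact hDH.not_isInducedP4 hxa hγa.symm
      ⟨hxb, hbe, hγe.symm, hxe, hxγ, fun h => hγb h.symm⟩
  by_cases hab : G.Adj a b
  · exact hDH.not_isInducedP4 hγa hab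
      ⟨hγe, hce.1.symm, hcb.1, fun h => hcγ h.symm, hγb, fun h => hbe h.symm⟩
  by_cases hae : G.Adj a e
  · exact hDH.not_isInducedP4 hcb.1.symm hce.1
      ⟨hxb.symm, hxa, hae, fun h => hab h.symm, hbe, hxe⟩
  -- `b - x - a - γ - e` is an induced path of length four
  have hxe3 := hDH.dist_eq_three ⟨hxa, hγa.symm, hγe, hxγ, hxe, hae⟩
  have hbe4 := hDH.dist_eq_dist_add_one_of_unique_adj hxb.symm
    (hxa.toWalk.concat hγa.symm |>.concat hγe)
    (by simp [show ¬G.Adj b a from fun h => hab h.symm, show ¬G.Adj b γ from fun h => hγb h.symm,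
      hbe])
    (by rintro rfl; exact hxe hxb)
  have := dist_le_two_of_adj_of_adj hcb.1.symm hce.1
  omega

theorem adj_of_adj_of_minimalFor (hDH : DistanceHereditary G) {u x a b γ : Ω} {k : ℕ}
    (hmax : ∀ w, G.dist u w ≤ k + 1)
    (htop : ∀ y z, G.dist u y = k + 1 → G.dist u z = k + 1 → ¬G.Adj y z)
    (hx : MinimalFor (fun y => G.dist u y = k + 1) G.neighborSet x) (hxa : G.Adj x a)
    (hxb : G.Adj x b) (hxγ : ¬G.Adj x γ) (hγa : G.Adj γ a) : G.Adj γ b := by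
  by_contra hγb
  have hlev : ∀ y w, G.dist u y = k + 1 → G.Adj y w → G.dist u w = k := fun y w hy h =>
    (h.dist_eq_or_of_forall_dist_le hmax hy).resolve_right fun hw => htop y w hy hw h
  have hxk : G.dist u x = k + 1 := hx.1
  have ha := hlev x a hxk hxa
  have hb := hlev x b hxk hxb
  have ha0 : G.dist u a ≠ 0 := by
    intro ha0
    have hrx : G.Reachable u x := Reachable.of_dist_ne_zero (by omega)
    have hua := (hrx.trans hxa.reachable).dist_eq_zero_iff.1 ha0
    have hub := (hrx.trans hxb.reachable).dist_eq_zero_iff.1 (by omega)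
    exact hγb (hub ▸ hua ▸ hγa)
  obtain ⟨c, hca⟩ := exists_isLowerNeighbor ha0
  have hcb := hDH.isLowerNeighbor_of_adj_of_adj hxb hxa (hb.trans ha.symm) (by omega) hca
  rcases hγa.diff_dist_adj (u := u) with hγ | hγ | hγ
  · have hcγ := hDH.isLowerNeighbor_of_adj hγa hγ.symm hca
    have hcx : ¬G.Adj c x := fun h => by have := h.dist_le_add_one u; have := hcγ.2; omega
    exact hDH.not_isInducedP4 hγa hxa.symm
      ⟨hcγ.1.symm, hcb.1, hxb.symm, hγb, fun h => hxγ h.symm, hcx⟩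
  · exact hγb (hDH.isLowerNeighbor_of_adj_of_adj hxb hxa (hb.trans ha.symm) (by omega)
      ⟨hγa, hγ.symm⟩).1
  · have hγtop : G.dist u γ = k + 1 := by have := hmax γ; omega
    obtain ⟨e, hγe, hxe⟩ : ∃ e, G.Adj γ e ∧ ¬G.Adj x e := by
      by_contra! h
      exact hγb (hx.2 hγtop h hxb)
    have hce := hDH.isLowerNeighbor_of_adj_of_adj hγe hγa ((hlev γ e hγtop hγe).trans ha.symm)
      (by rw [hlev γ e hγtop hγe]; omega) hca
    exact hDH.false_of_crossed_neighbors hxγ hxa hγa hxb hγb hγe hxe hca hcb hce (by omega)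
      (by omega)

theorem exists_pendant_or_isTwin_of_top_indep [Fintype Ω] (hDH : DistanceHereditary G) {u : Ω}
    {k : ℕ} (hmax : ∀ w, G.dist u w ≤ k + 1)
    (htop : ∀ y z, G.dist u y = k + 1 → G.dist u z = k + 1 → ¬G.Adj y z) {x₀ : Ω}
    (hx₀ : G.dist u x₀ = k + 1) :
    (∃ a : Ω, ∃! b : Ω, G.Adj a b) ∨ ∃ a b, a ≠ b ∧ IsTwin G a b := by
  classical
  obtain ⟨x, hx⟩ := Set.Finite.exists_minimalFor G.neighborSet {y | G.dist u y = k + 1}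
    (Set.toFinite _) ⟨x₀, hx₀⟩
  by_cases hpend : ∃! b, G.Adj x b
  · exact Or.inl ⟨x, hpend⟩
  set D : Finset Ω := Finset.univ.filter (G.Adj x)
  have hmemD : ∀ v, v ∈ D ↔ G.Adj x v := by simp [D]
  obtain ⟨c₀, hc₀⟩ := exists_isLowerNeighbor (u := u) (v := x) (by rw [hx.1]; omega)
  obtain ⟨c₁, hc₁, hc₁₀⟩ : ∃ c₁, G.Adj x c₁ ∧ c₁ ≠ c₀ := by
    by_contra! h
    exact hpend ⟨c₀, hc₀.1.symm, h⟩
  have hP4 : G.P4FreeOn D := fun a ha _ _ _ _ d hd =>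
    hDH.not_isInducedP4 ((hmemD a).1 ha).symm ((hmemD d).1 hd)
  obtain ⟨a, ha, b, hb, hab, htw⟩ :=
    hP4.hasTwinsOn (Finset.one_lt_card.2 ⟨c₁, (hmemD _).2 hc₁, c₀, (hmemD _).2 hc₀.1.symm, hc₁₀⟩)
  rw [hmemD] at ha hb
  refine Or.inr ⟨a, b, hab, fun γ hγa hγb => ?_⟩
  by_cases hxγ : G.Adj x γ
  · exact htw γ ((hmemD γ).2 hxγ) hγa hγb
  exact ⟨hDH.adj_of_adj_of_minimalFor hmax htop hx ha hb hxγ,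
    hDH.adj_of_adj_of_minimalFor hmax htop hx hb ha hxγ⟩

end DistanceHereditary

/-- A finite distance-hereditary graph with at least two vertices has
a pendant vertex or two distinct twins. -/
theorem stmt_4 {Ω : Type*} [Fintype Ω] (G : SimpleGraph Ω)
    (hDH : DistanceHereditary G) (hcard : 2 ≤ Fintype.card Ω) :
    (∃ a : Ω, ∃! b : Ω, G.Adj a b) ∨ (∃ a b : Ω, a ≠ b ∧ IsTwin G a b) := by
  by_cases hedge : ∃ p q, G.Adj p q
  · obtain ⟨u, q, huq⟩ := hedge
    have : Nonempty Ω := ⟨u⟩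
    obtain ⟨x₀, hmax⟩ := Finite.exists_max (G.dist u)
    obtain ⟨k, hk⟩ : ∃ k, G.dist u x₀ = k + 1 :=
      Nat.exists_eq_add_one.2 ((SimpleGraph.dist_eq_one_iff_adj.2 huq).symm.trans_le (hmax q))
    rw [hk] at hmax
    by_cases htop : ∃ y z, G.dist u y = k + 1 ∧ G.dist u z = k + 1 ∧ G.Adj y z
    · obtain ⟨y, z, hy, hz, hyz⟩ := htop
      exact Or.inr (hDH.exists_isTwin_of_adj_top hmax hy hz hyz)
    · push Not at htop
      exact hDH.exists_pendant_or_isTwin_of_top_indep hmax htop hk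
  · push Not at hedge
    obtain ⟨a, b, hab⟩ := Fintype.exists_pair_of_one_lt_card hcard
    exact Or.inr ⟨a, b, hab, fun γ _ _ => iff_of_false (hedge γ a) (hedge γ b)⟩
end

section
/- Let 𝒳 be a coherent configuration. Then the relation e_𝒳 of being 𝒳-twins is a parabolic of 𝒳; in particular, e_𝒳 is an equivalence relation on Ω and a union of basis relations of 𝒳. -/
open Set

universe u v

variable {Ω : Type*}

/-! If `(a, b)` and `(a', b')` lie in the same basis relation `s` and `a, b` are twins, then so
are `a', b'`: for `γ' ∉ {a', b'}`, let `r ∋ (γ', a')` and `r' ∋ (γ', b')`. Then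
`c^s_{r* r'} > 0`, so some `γ` has `(γ, a) ∈ r` and `(γ, b) ∈ r'`; neither `r` nor `r'` meets
the diagonal, so `γ ∉ {a, b}`, and twinness of `a, b` forces `r = r'`. Hence `e_𝒳` is a union of
basis relations, and the same transfer gives transitivity. -/

namespace CoherentConfiguration

variable (X : CoherentConfiguration Ω)

theorem exists_mem (p : Ω × Ω) : ∃ s ∈ X.S, p ∈ s := by
  obtain ⟨s, ⟨hs, hp⟩, -⟩ := X.isPartition.2 p
  exact ⟨s, hs, hp⟩

theorem eq_of_mem_of_mem {s t : Set (Ω × Ω)} (hs : s ∈ X.S) (ht : t ∈ X.S) {p : Ω × Ω}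
    (hps : p ∈ s) (hpt : p ∈ t) : s = t := by
  obtain ⟨u, -, hu⟩ := X.isPartition.2 p
  rw [hu s ⟨hs, hps⟩, hu t ⟨ht, hpt⟩]

theorem mem_iff_mem_of_mem {s : Set (Ω × Ω)} (hs : s ∈ X.S) {p q : Ω × Ω} (hp : p ∈ s)
    (hq : q ∈ s) {u : Set (Ω × Ω)} (hu : u ∈ X.S) : p ∈ u ↔ q ∈ u :=
  ⟨fun h => X.eq_of_mem_of_mem hu hs h hp ▸ hq, fun h => X.eq_of_mem_of_mem hu hs h hq ▸ hp⟩

theorem fst_eq_snd_of_mem_of_mem {s : Set (Ω × Ω)} (hs : s ∈ X.S) {c : Ω} (hc : (c, c) ∈ s)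
    {p : Ω × Ω} (hp : p ∈ s) : p.1 = p.2 := by
  obtain ⟨T, hTS, hT⟩ := X.diag_isRelation
  obtain ⟨u, huT, hcu⟩ : (c, c) ∈ ⋃₀ T := hT ▸ ⟨rfl, trivial⟩
  have hp' : p ∈ ⋃₀ T := ⟨u, huT, X.eq_of_mem_of_mem hs (hTS huT) hc hcu ▸ hp⟩
  exact (hT ▸ hp').1

theorem exists_path_of_mem [Finite Ω] {r s t : Set (Ω × Ω)} (hr : r ∈ X.S) (hs : s ∈ X.S)
    (ht : t ∈ X.S) {p q : Ω × Ω} (hp : p ∈ t) (hq : q ∈ t)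
    (h : ∃ γ, (p.1, γ) ∈ r ∧ (γ, p.2) ∈ s) : ∃ γ, (q.1, γ) ∈ r ∧ (γ, q.2) ∈ s := by
  have hpos : 0 < interNum r s p := (Set.ncard_pos (Set.toFinite _)).mpr h
  rw [X.coherent r hr s hs t ht p hp q hq] at hpos
  exact Set.nonempty_of_ncard_ne_zero hpos.ne'

theorem isRelation_of_forall_subset {e : Set (Ω × Ω)}
    (he : ∀ s ∈ X.S, ∀ p ∈ s, p ∈ e → s ⊆ e) : X.IsRelation e := by
  refine ⟨{s ∈ X.S | s ⊆ e}, fun s hs => hs.1, Subset.antisymm ?_ fun p hp => ?_⟩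
  · rintro p ⟨s, hs, hps⟩
    exact hs.2 hps
  · obtain ⟨s, hs, hps⟩ := X.exists_mem p
    exact ⟨s, ⟨hs, he s hs p hps hp⟩, hps⟩

theorem xTwin_of_mem [Finite Ω] {s : Set (Ω × Ω)} (hs : s ∈ X.S) {a b a' b' : Ω}
    (hab : (a, b) ∈ s) (htwin : XTwin X a b) (hab' : (a', b') ∈ s) : XTwin X a' b' := by
  intro γ' hγa' hγb'
  obtain ⟨r, hr, hγr⟩ := X.exists_mem (γ', a')
  obtain ⟨r', hr', hγr'⟩ := X.exists_mem (γ', b')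
  suffices r = r' from fun u hu => X.mem_iff_mem_of_mem hr hγr (this ▸ hγr') hu
  obtain ⟨γ, hγa, hγb⟩ := X.exists_path_of_mem (X.swap_mem r hr) hr' hs hab' hab ⟨γ', hγr, hγr'⟩
  have hγa : (γ, a) ∈ r := hγa
  have hne_a : γ ≠ a := by
    rintro rfl
    exact hγa' (X.fst_eq_snd_of_mem_of_mem hr hγa hγr)
  have hne_b : γ ≠ b := by
    rintro rfl
    exact hγb' (X.fst_eq_snd_of_mem_of_mem hr' hγb hγr')
  exact X.eq_of_mem_of_mem hr hr' ((htwin γ hne_a hne_b r hr).mp hγa) hγb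

theorem xTwin_refl (a : Ω) : XTwin X a a :=
  fun _ _ _ _ _ => Iff.rfl

theorem XTwin.symm {X : CoherentConfiguration Ω} {a b : Ω} (h : XTwin X a b) : XTwin X b a :=
  fun γ hγb hγa u hu => (h γ hγa hγb u hu).symm

theorem XTwin.trans [Finite Ω] {X : CoherentConfiguration Ω} {a b c : Ω} (hab : XTwin X a b)
    (hbc : XTwin X b c) : XTwin X a c := by
  by_cases hac : a = c
  · exact hac ▸ X.xTwin_refl a
  by_cases ha_b : a = b
  · exact ha_b ▸ hbc
  obtain ⟨s, hs, habs⟩ := X.exists_mem (a, b)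
  exact X.xTwin_of_mem hs habs hab ((hbc a ha_b hac s hs).mp habs)

end CoherentConfiguration

open CoherentConfiguration in
/-- The relation `e_X` of being `X`-twins is a parabolic of `X`:
an equivalence relation on `Ω` which is a union of basis relations of `X`. -/
theorem stmt_6 {Ω : Type*} [Fintype Ω] (X : CoherentConfiguration Ω) :
    IsParabolic X (twinRel X) :=
  ⟨⟨X.xTwin_refl, fun _ _ => XTwin.symm, fun _ _ _ => XTwin.trans⟩,
    X.isRelation_of_forall_subset fun _ hs _ hp htwin _ hq => X.xTwin_of_mem hs hp htwin hq⟩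
end

section
/- Let X be a finite graph with vertex set Ω, π a correct partition of X, m a matching of WL(X)_π that is pendant or twin with respect to X, and Δ = Ω_-(m). Then WL(X)_π ∖ Δ = WL(X ∖ Δ)_{π ∖ {Δ}}, and π ∖ {Δ} is a correct partition of the graph X ∖ Δ. -/
open Set

universe u v

variable {Ω : Type*}

/-!
`X ∖ Δ` is a coherent configuration on `Δᶜ` containing the edges of `G ∖ Δ` and the fibers of
`π ∖ {Δ}`, so `WL(G ∖ Δ)_{π ∖ {Δ}} ≤ X ∖ Δ`. For the converse, let `g` fix `Δᶜ` and send each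
`δ ∈ Δ` to its partner `δm`. Pulling `Y = WL(G ∖ Δ)_{π ∖ {Δ}}` back along `g`, with the pairs
further split by which endpoints lie in `Δ`, gives a coherent configuration on `Ω`: `g` is injective
on `Δ` and on `Δᶜ`, and maps them onto unions of fibers of `Y` (`Ω₊(m)` and everything). Since `m`
is pendant or twin, whether two points are adjacent in `G` depends only on their labels and on the
pair of their images, so this pullback contains the edges of `G` and every fiber of `X`. Hence it
lies above `X`, and restricting back to `Δᶜ` gives `X ∖ Δ ≤ Y`. The fibers of `X ∖ Δ` are the
fibers of `X` other than `Δ`, which gives correctness.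
-/

namespace CoherentConfiguration

variable {α : Type*} {W W' : CoherentConfiguration α} {r s t u : Set (α × α)} {p q : α × α}

theorem exists_mem_S (W : CoherentConfiguration α) (p : α × α) : ∃ s ∈ W.S, p ∈ s := by
  obtain ⟨s, ⟨hs, hp⟩, -⟩ := W.isPartition.2 p
  exact ⟨s, hs, hp⟩

theorem eq_of_mem_S (hs : s ∈ W.S) (ht : t ∈ W.S) (hps : p ∈ s) (hpt : p ∈ t) : s = t := by
  obtain ⟨u, -, hu⟩ := W.isPartition.2 p
  exact (hu s ⟨hs, hps⟩).trans (hu t ⟨ht, hpt⟩).symm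

theorem nonempty_of_mem_S (hs : s ∈ W.S) : s.Nonempty :=
  nonempty_iff_ne_empty.2 fun h => W.isPartition.1 (h ▸ hs)

theorem isRelation_iff : W.IsRelation r ↔ ∀ p ∈ r, ∀ s ∈ W.S, p ∈ s → s ⊆ r := by
  constructor
  · rintro ⟨T, hT, rfl⟩ p ⟨u, huT, hpu⟩ s hs hps
    exact eq_of_mem_S hs (hT huT) hps hpu ▸ subset_sUnion_of_mem huT
  · intro h
    refine ⟨{s ∈ W.S | s ⊆ r}, fun s hs => hs.1, (sUnion_subset fun s hs => hs.2).antisymm ?_⟩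
    intro p hp
    obtain ⟨s, hs, hps⟩ := W.exists_mem_S p
    exact ⟨s, ⟨hs, h p hp s hs hps⟩, hps⟩

theorem IsRelation.mem_iff (hr : W.IsRelation r) (hs : s ∈ W.S) (hp : p ∈ s) (hq : q ∈ s) :
    p ∈ r ↔ q ∈ r :=
  ⟨fun h => isRelation_iff.1 hr p h s hs hp hq, fun h => isRelation_iff.1 hr q h s hs hq hp⟩

theorem isRelation_of_mem_S (hs : s ∈ W.S) : W.IsRelation s :=
  ⟨{s}, singleton_subset_iff.2 hs, sUnion_singleton s⟩

theorem isRelation_diagRel_univ (W : CoherentConfiguration α) : W.IsRelation (diagRel univ) :=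
  W.diag_isRelation

theorem subset_diagRel_univ_of_mem_S {a : α} (hu : u ∈ W.S) (ha : (a, a) ∈ u) :
    u ⊆ diagRel univ :=
  isRelation_iff.1 W.isRelation_diagRel_univ (a, a) ⟨rfl, trivial⟩ u hu ha

theorem S_subset_of_forall_isRelation (h : ∀ s ∈ W.S, W'.IsRelation s)
    (h' : ∀ s ∈ W'.S, W.IsRelation s) : W.S ⊆ W'.S := by
  intro s hs
  obtain ⟨p, hp⟩ := nonempty_of_mem_S hs
  obtain ⟨s', hs', hps'⟩ := W'.exists_mem_S p
  have : s' = s := (isRelation_iff.1 (h s hs) p hp s' hs' hps').antisymm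
    (isRelation_iff.1 (h' s' hs') p hps' s hs hp)
  exact this ▸ hs'

theorem S_eq_of_forall_isRelation (h : ∀ s ∈ W.S, W'.IsRelation s)
    (h' : ∀ s ∈ W'.S, W.IsRelation s) : W.S = W'.S :=
  (S_subset_of_forall_isRelation h h').antisymm (S_subset_of_forall_isRelation h' h)

theorem diagRel_injective : Function.Injective (diagRel : Set α → Set (α × α)) := by
  intro A B h
  ext x
  exact ⟨fun hx => (h ▸ ⟨rfl, hx⟩ : (x, x) ∈ diagRel B).2,
    fun hx => (h ▸ ⟨rfl, hx⟩ : (x, x) ∈ diagRel A).2⟩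

theorem eq_diagRel_of_subset (h : s ⊆ diagRel univ) : s = diagRel {x | (x, x) ∈ s} := by
  ext ⟨x, y⟩
  constructor
  · intro hxy
    obtain rfl : x = y := (h hxy).1
    exact ⟨rfl, hxy⟩
  · rintro ⟨hxy, hx⟩
    obtain rfl : x = y := hxy
    exact hx

theorem IsFiber.isRelation {Φ : Set α} (hΦ : W.IsFiber Φ) : W.IsRelation (diagRel Φ) :=
  isRelation_of_mem_S hΦ

theorem IsFiber.eq_of_mem {Φ Ψ : Set α} {a : α} (hΦ : W.IsFiber Φ) (hΨ : W.IsFiber Ψ)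
    (haΦ : a ∈ Φ) (haΨ : a ∈ Ψ) : Φ = Ψ :=
  diagRel_injective (eq_of_mem_S (p := (a, a)) hΦ hΨ ⟨rfl, haΦ⟩ ⟨rfl, haΨ⟩)

theorem diag_snd_mem (hs : s ∈ W.S) (hu : u ∈ W.S) (hp : p ∈ s) (hq : q ∈ s)
    (hpu : (p.2, p.2) ∈ u) : (q.2, q.2) ∈ u := by
  have hud := subset_diagRel_univ_of_mem_S hu hpu
  have hp1 : interNum s u p = 1 := by
    rw [interNum, ncard_eq_one]
    refine ⟨p.2, Subset.antisymm (fun γ hγ => (hud hγ.2).1) ?_⟩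
    rintro γ rfl
    exact ⟨hp, hpu⟩
  obtain ⟨γ, -, hγu⟩ : {γ | (q.1, γ) ∈ s ∧ (γ, q.2) ∈ u}.Nonempty :=
    nonempty_of_ncard_ne_zero (by rw [← interNum, W.coherent s hs u hu s hs q hq p hp, hp1]; simp)
  obtain rfl : γ = q.2 := (hud hγu).1
  exact hγu

theorem diag_fst_mem (hs : s ∈ W.S) (hu : u ∈ W.S) (hp : p ∈ s) (hq : q ∈ s)
    (hpu : (p.1, p.1) ∈ u) : (q.1, q.1) ∈ u :=
  diag_snd_mem (p := p.swap) (q := q.swap) (W.swap_mem s hs) hu hp hq hpu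

theorem snd_mem_of_mem_S {U : Set α} (hU : W.IsRelation (diagRel U)) (hs : s ∈ W.S)
    (hp : p ∈ s) (hq : q ∈ s) (hpU : p.2 ∈ U) : q.2 ∈ U := by
  obtain ⟨u, hu, hpu⟩ := W.exists_mem_S (p.2, p.2)
  exact (isRelation_iff.1 hU _ ⟨rfl, hpU⟩ u hu hpu (diag_snd_mem hs hu hp hq hpu)).2

theorem isRelation_diagRel_compl {U : Set α} (hU : W.IsRelation (diagRel U)) :
    W.IsRelation (diagRel Uᶜ) := by
  rw [isRelation_iff]
  rintro ⟨a, b⟩ ⟨hab, ha⟩ s hs has q hq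
  obtain rfl : a = b := hab
  have hqd := (subset_diagRel_univ_of_mem_S hs has hq).1
  exact ⟨hqd, fun hqU => ha (snd_mem_of_mem_S hU hs hq has (hqd ▸ hqU))⟩

theorem isFiber_omegaMinus [Finite α] {s : Set (α × α)} (hs : s ∈ W.S) :
    W.IsFiber (OmegaMinus s) := by
  obtain ⟨⟨a, b⟩, hab⟩ := nonempty_of_mem_S hs
  obtain ⟨u, hu, hau⟩ := W.exists_mem_S (a, a)
  suffices u = diagRel (OmegaMinus s) from (this ▸ hu : diagRel (OmegaMinus s) ∈ W.S)
  refine Subset.antisymm (fun ⟨x, y⟩ hxy => ?_) ?_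
  · obtain rfl : x = y := (subset_diagRel_univ_of_mem_S hu hau hxy).1
    refine ⟨rfl, ?_⟩
    -- the valency of `s` is the intersection number `c^u_{s s*}`, positive at `(a, a)`
    have hpos : 0 < interNum s {p | (p.2, p.1) ∈ s} (a, a) :=
      (ncard_pos (toFinite _)).2 ⟨b, hab, hab⟩
    rw [W.coherent s hs _ (W.swap_mem s hs) u hu (a, a) hau (x, x) hxy] at hpos
    obtain ⟨γ, hγ, -⟩ := (ncard_pos (toFinite _)).1 hpos
    exact ⟨γ, hγ⟩
  · rintro ⟨x, y⟩ ⟨hxy, c, hxc⟩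
    obtain rfl : x = y := hxy
    exact diag_fst_mem hs hu hab hxc hau

theorem isFiber_omegaPlus [Finite α] {s : Set (α × α)} (hs : s ∈ W.S) :
    W.IsFiber (OmegaPlus s) :=
  isFiber_omegaMinus (W.swap_mem s hs)

theorem disjoint_omegaMinus_omegaPlus [Finite α] {s : Set (α × α)} (hs : s ∈ W.S)
    (hne : OmegaMinus s ≠ OmegaPlus s) : Disjoint (OmegaMinus s) (OmegaPlus s) :=
  disjoint_left.2 fun _ h h' => hne ((isFiber_omegaMinus hs).eq_of_mem (isFiber_omegaPlus hs) h h')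

end CoherentConfiguration

def pullbackRel {α β ι : Type*} (g : α → β) (side : α → ι) (i j : ι) (s : Set (β × β)) :
    Set (α × α) :=
  {p | side p.1 = i ∧ side p.2 = j ∧ (g p.1, g p.2) ∈ s}

namespace CoherentConfiguration

variable {α β ι : Type*}

theorem ncard_inter_eq_of_mem_S {W : CoherentConfiguration α} {U : Set α} {r s t : Set (α × α)}
    {p q : α × α} (hU : W.IsRelation (diagRel U)) (hr : r ∈ W.S) (hs : s ∈ W.S) (ht : t ∈ W.S)
    (hp : p ∈ t) (hq : q ∈ t) :
    {c | c ∈ U ∧ (p.1, c) ∈ r ∧ (c, p.2) ∈ s}.ncard =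
      {c | c ∈ U ∧ (q.1, c) ∈ r ∧ (c, q.2) ∈ s}.ncard := by
  by_cases hrU : ∀ x ∈ r, x.2 ∈ U
  · have key : ∀ x : α × α, {c | c ∈ U ∧ (x.1, c) ∈ r ∧ (c, x.2) ∈ s} =
        {c | (x.1, c) ∈ r ∧ (c, x.2) ∈ s} := fun x => by
      ext c
      exact ⟨fun h => h.2, fun h => ⟨hrU _ h.1, h⟩⟩
    rw [key, key]
    exact W.coherent r hr s hs t ht p hp q hq
  · obtain ⟨x, hx, hxU⟩ := not_forall₂.1 hrU
    have key : ∀ y : α × α, {c | c ∈ U ∧ (y.1, c) ∈ r ∧ (c, y.2) ∈ s} = ∅ := fun y =>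
      eq_empty_of_forall_notMem fun c ⟨hc, hyc, _⟩ => hxU (snd_mem_of_mem_S hU hr hyc hx hc)
    rw [key, key]

variable (g : α → β) (side : α → ι)

theorem interNum_pullbackRel [DecidableEq ι] (hinj : ∀ a b, side a = side b → g a = g b → a = b)
    (i j j' k : ι) (r s : Set (β × β)) (x : α × α) :
    interNum (pullbackRel g side i j r) (pullbackRel g side j' k s) x =
      if side x.1 = i ∧ j = j' ∧ side x.2 = k then
        {c | c ∈ g '' {a | side a = j} ∧ (g x.1, c) ∈ r ∧ (c, g x.2) ∈ s}.ncard
      else 0 := by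
  unfold interNum
  split_ifs with h
  · obtain ⟨h1, rfl, h2⟩ := h
    rw [← InjOn.ncard_image (f := g) fun a ha b hb => hinj a b (ha.1.2.1.trans hb.1.2.1.symm)]
    congr 1
    ext c
    constructor
    · rintro ⟨γ, ⟨⟨-, hγ, hr⟩, -, -, hs⟩, rfl⟩
      exact ⟨⟨γ, hγ, rfl⟩, hr, hs⟩
    · rintro ⟨⟨γ, hγ, rfl⟩, hr, hs⟩
      exact ⟨γ, ⟨⟨h1, hγ, hr⟩, hγ, h2, hs⟩, rfl⟩
  · refine (congrArg ncard (eq_empty_of_forall_notMem ?_)).trans (ncard_empty α)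
    rintro γ ⟨⟨h1, hj, -⟩, hj', h2, -⟩
    exact h ⟨h1, hj.symm.trans hj', h2⟩

def pullback (Y : CoherentConfiguration β) (hinj : ∀ a b, side a = side b → g a = g b → a = b)
    (himage : ∀ i, Y.IsRelation (diagRel (g '' {a | side a = i}))) :
    CoherentConfiguration α where
  S := {t | t.Nonempty ∧ ∃ i j, ∃ s ∈ Y.S, t = pullbackRel g side i j s}
  isPartition := by
    refine ⟨fun h => not_nonempty_empty h.1, fun p => ?_⟩
    obtain ⟨u, hu, hpu⟩ := Y.exists_mem_S (g p.1, g p.2)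
    have hp : p ∈ pullbackRel g side (side p.1) (side p.2) u := ⟨rfl, rfl, hpu⟩
    refine ⟨_, ⟨⟨⟨p, hp⟩, _, _, u, hu, rfl⟩, hp⟩, ?_⟩
    rintro t ⟨⟨-, i, j, s, hs, rfl⟩, rfl, rfl, hps⟩
    rw [eq_of_mem_S hs hu hps hpu]
  diag_isRelation := by
    refine ⟨{t | (t.Nonempty ∧ ∃ i j, ∃ s ∈ Y.S, t = pullbackRel g side i j s) ∧
      t ⊆ diagRel univ}, fun t ht => ht.1, Subset.antisymm (sUnion_subset fun t ht => ht.2) ?_⟩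
    rintro ⟨a, b⟩ ⟨hab, -⟩
    obtain rfl : a = b := hab
    obtain ⟨u, hu, hau⟩ := Y.exists_mem_S (g a, g a)
    have ha : (a, a) ∈ pullbackRel g side (side a) (side a) u := ⟨rfl, rfl, hau⟩
    refine ⟨_, ⟨⟨⟨_, ha⟩, _, _, u, hu, rfl⟩, ?_⟩, ha⟩
    rintro ⟨b, c⟩ ⟨hb, hc, hbc⟩
    exact ⟨hinj b c (hb.trans hc.symm) (subset_diagRel_univ_of_mem_S hu hau hbc).1, trivial⟩
  swap_mem := by
    rintro t ⟨⟨p, hp⟩, i, j, s, hs, rfl⟩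
    refine ⟨⟨p.swap, hp⟩, j, i, _, Y.swap_mem s hs, ?_⟩
    ext
    exact and_left_comm
  coherent := by
    classical
    rintro r ⟨-, i, j, r', hr', rfl⟩ s ⟨-, j', k, s', hs', rfl⟩ t ⟨-, i', k', t', ht', rfl⟩
      p ⟨hp1, hp2, hp⟩ q ⟨hq1, hq2, hq⟩
    rw [interNum_pullbackRel g side hinj, interNum_pullbackRel g side hinj, hp1, hp2, hq1, hq2]
    split_ifs
    · exact ncard_inter_eq_of_mem_S (himage j) hr' hs' ht' hp hq
    · rfl

variable {g side} {Y : CoherentConfiguration β} {hinj : ∀ a b, side a = side b → g a = g b → a = b}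
  {himage : ∀ i, Y.IsRelation (diagRel (g '' {a | side a = i}))}

theorem isRelation_pullback_of_iff {R : Set (α × α)} {A : Set (β × β)} (hA : Y.IsRelation A)
    (F : ι → ι → Prop → Prop → Prop)
    (hR : ∀ p : α × α, p ∈ R ↔ F (side p.1) (side p.2) (g p.1 = g p.2) ((g p.1, g p.2) ∈ A)) :
    (Y.pullback g side hinj himage).IsRelation R := by
  rw [isRelation_iff]
  rintro p hp t ⟨-, i, j, s, hs, rfl⟩ ⟨rfl, rfl, hps⟩ q ⟨hq1, hq2, hqs⟩
  have hdiag : g p.1 = g p.2 ↔ g q.1 = g q.2 := by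
    simpa [diagRel] using Y.isRelation_diagRel_univ.mem_iff hs hps hqs
  rw [hR] at hp ⊢
  rwa [hq1, hq2, ← propext hdiag, ← propext (hA.mem_iff hs hps hqs)]

theorem isRelation_pullback_diagRel {U : Set β} (hU : Y.IsRelation (diagRel U)) (i : ι) :
    (Y.pullback g side hinj himage).IsRelation (diagRel {a | side a = i ∧ g a ∈ U}) := by
  refine isRelation_pullback_of_iff hU (fun j k _ x => j = i ∧ k = i ∧ x) fun p => ?_
  constructor
  · rintro ⟨hp, hi, hU⟩
    exact ⟨hi, hp ▸ hi, congrArg g hp, hU⟩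
  · rintro ⟨h1, h2, hg, hU⟩
    exact ⟨hinj _ _ (h1.trans h2.symm) hg, h1, hU⟩

theorem isRelation_preimage_of_isRelation_pullback {h : β → α} {i : ι} (hgh : ∀ b, g (h b) = b)
    (hside : ∀ b, side (h b) = i) {R : Set (α × α)}
    (hR : (Y.pullback g side hinj himage).IsRelation R) :
    Y.IsRelation {p | (h p.1, h p.2) ∈ R} := by
  rw [isRelation_iff]
  intro p hp u hu hpu q hq
  have hmem : ∀ x ∈ u, (h x.1, h x.2) ∈ pullbackRel g side i i u := fun x hx =>
    ⟨hside _, hside _, by rwa [hgh, hgh]⟩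
  exact isRelation_iff.1 hR _ hp _ ⟨⟨_, hmem p hpu⟩, i, i, u, hu, rfl⟩ (hmem p hpu) (hmem q hq)

end CoherentConfiguration

theorem diagRel_restrictSet {α : Type*} (Δ Φ : Set α) :
    diagRel (restrictSet Δ Φ) = restrictRel Δ (diagRel Φ) := by
  ext
  exact ⟨fun ⟨h, hΦ⟩ => ⟨congrArg Subtype.val h, hΦ⟩, fun ⟨h, hΦ⟩ => ⟨Subtype.ext h, hΦ⟩⟩

namespace CoherentConfiguration

variable {α : Type*} {X : CoherentConfiguration α} {Δ : Set α}

/-- `X ∖ Δ`, realised as the pullback of `X` along the inclusion `Δᶜ → α` with a single label. -/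
def restrict (X : CoherentConfiguration α) (Δ : Set α) (hΔ : X.IsRelation (diagRel Δ)) :
    CoherentConfiguration ↥(Δᶜ) :=
  X.pullback Subtype.val (fun _ => ()) (fun _ _ _ h => Subtype.val_injective h) fun _ => by
    simpa [compl_def] using isRelation_diagRel_compl hΔ

theorem restrict_S (hΔ : X.IsRelation (diagRel Δ)) :
    (X.restrict Δ hΔ).S = {t | t.Nonempty ∧ ∃ s ∈ X.S, t = restrictRel Δ s} := by
  have h : ∀ s, pullbackRel (Subtype.val : ↥(Δᶜ) → α) (fun _ => ()) () () s = restrictRel Δ s :=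
    fun s => by ext; simp [pullbackRel, restrictRel]
  ext t
  simp [restrict, pullback, h]

theorem IsRelation.restrict {r : Set (α × α)} (hr : X.IsRelation r)
    (hΔ : X.IsRelation (diagRel Δ)) : (X.restrict Δ hΔ).IsRelation (restrictRel Δ r) :=
  isRelation_pullback_of_iff hr (fun _ _ _ x => x) fun _ => Iff.rfl

theorem setOf_isFiber_restrict (hΔ : X.IsFiber Δ) :
    {Γ | (X.restrict Δ hΔ.isRelation).IsFiber Γ} =
      restrictSet Δ '' ({Φ | X.IsFiber Φ} \ {Δ}) := by
  ext Γ
  change diagRel Γ ∈ (X.restrict Δ hΔ.isRelation).S ↔ _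
  rw [restrict_S]
  constructor
  · rintro ⟨⟨⟨c, c'⟩, hcc, hcΓ⟩, s, hs, hΓs⟩
    obtain rfl : c = c' := hcc
    have hcs : ((c : α), (c : α)) ∈ s := (hΓs ▸ ⟨rfl, hcΓ⟩ : (c, c) ∈ restrictRel Δ s)
    have hsΦ := eq_diagRel_of_subset (subset_diagRel_univ_of_mem_S hs hcs)
    have hΦ : X.IsFiber {x | (x, x) ∈ s} := by rw [IsFiber, ← hsΦ]; exact hs
    refine ⟨_, ⟨hΦ, fun hΦΔ => c.2 ((hΦΔ : {x | (x, x) ∈ s} = Δ) ▸ hcs)⟩, ?_⟩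
    apply diagRel_injective
    rw [diagRel_restrictSet, ← hsΦ, hΓs]
  · rintro ⟨Φ, ⟨hΦ, hΦΔ⟩, rfl⟩
    obtain ⟨⟨a, a'⟩, haa, ha⟩ := nonempty_of_mem_S hΦ
    obtain rfl : a = a' := haa
    have haΔ : a ∉ Δ := fun h => hΦΔ (hΦ.eq_of_mem hΔ ha h)
    rw [diagRel_restrictSet]
    exact ⟨⟨(⟨a, haΔ⟩, ⟨a, haΔ⟩), rfl, ha⟩, _, hΦ, rfl⟩

end CoherentConfiguration

section Retraction

variable {α : Type*} {G : SimpleGraph α} {X : CoherentConfiguration α} {m : Set (α × α)}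
  {g : α → ↥(OmegaMinus m)ᶜ} {a b : α}

open CoherentConfiguration

theorem exists_retraction (hdisj : Disjoint (OmegaMinus m) (OmegaPlus m)) :
    ∃ g : α → ↥(OmegaMinus m)ᶜ, (∀ a ∉ OmegaMinus m, (g a : α) = a) ∧
      ∀ a ∈ OmegaMinus m, (a, (g a : α)) ∈ m := by
  classical
  refine ⟨fun a => if h : a ∈ OmegaMinus m then
      ⟨Classical.choose h, disjoint_right.1 hdisj ⟨a, Classical.choose_spec h⟩⟩ else ⟨a, h⟩,
    fun a ha => by simp [ha], fun a ha => by simpa [ha] using Classical.choose_spec ha⟩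

theorem retraction_coe (hg_out : ∀ a ∉ OmegaMinus m, (g a : α) = a) (c : ↥(OmegaMinus m)ᶜ) :
    g c = c :=
  Subtype.ext (hg_out c c.2)

theorem eq_of_retraction_eq (hm : IsMatchingCC X m)
    (hg_out : ∀ a ∉ OmegaMinus m, (g a : α) = a) (hg_m : ∀ a ∈ OmegaMinus m, (a, (g a : α)) ∈ m)
    (hside : a ∈ OmegaMinus m ↔ b ∈ OmegaMinus m) (h : g a = g b) : a = b := by
  by_cases ha : a ∈ OmegaMinus m
  · exact hm.2.2.2 a b _ (hg_m a ha) (h ▸ hg_m b (hside.1 ha))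
  · calc a = g a := (hg_out a ha).symm
      _ = g b := congrArg _ h
      _ = b := hg_out b (hside.not.1 ha)

theorem mem_or_mem_of_retraction_eq (hg_out : ∀ a ∉ OmegaMinus m, (g a : α) = a)
    (hg_m : ∀ a ∈ OmegaMinus m, (a, (g a : α)) ∈ m)
    (hside : ¬(a ∈ OmegaMinus m ↔ b ∈ OmegaMinus m)) (h : g a = g b) :
    (a, b) ∈ m ∨ (b, a) ∈ m := by
  by_cases ha : a ∈ OmegaMinus m
  · have hb : b ∉ OmegaMinus m := fun hb => hside (iff_of_true ha hb)
    exact Or.inl (by simpa [h, hg_out b hb] using hg_m a ha)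
  · have hb : b ∈ OmegaMinus m := by_contra fun hb => hside (iff_of_false ha hb)
    exact Or.inr (by simpa [← h, hg_out a ha] using hg_m b hb)

theorem image_retraction_omegaMinus (hm : IsMatchingCC X m)
    (hg_m : ∀ a ∈ OmegaMinus m, (a, (g a : α)) ∈ m) :
    g '' OmegaMinus m = restrictSet (OmegaMinus m) (OmegaPlus m) := by
  ext c
  constructor
  · rintro ⟨a, ha, rfl⟩
    exact ⟨a, hg_m a ha⟩
  · rintro ⟨a, hac⟩
    exact ⟨a, ⟨_, hac⟩, Subtype.ext (hm.2.2.1 a _ _ (hg_m a ⟨_, hac⟩) hac)⟩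

theorem image_retraction_compl (hg_out : ∀ a ∉ OmegaMinus m, (g a : α) = a) :
    g '' (OmegaMinus m)ᶜ = univ :=
  eq_univ_of_forall fun c => ⟨c, c.2, retraction_coe hg_out c⟩

theorem IsPendantMatching.adj_iff (hm : IsPendantMatching G X m)
    (hg_out : ∀ a ∉ OmegaMinus m, (g a : α) = a) (hg_m : ∀ a ∈ OmegaMinus m, (a, (g a : α)) ∈ m)
    (a b : α) :
    G.Adj a b ↔ (a ∉ OmegaMinus m ∧ b ∉ OmegaMinus m ∧ G.Adj (g a) (g b)) ∨
      (¬(a ∈ OmegaMinus m ↔ b ∈ OmegaMinus m) ∧ g a = g b) := by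
  have hpend : ∀ a ∈ OmegaMinus m, ∀ b, G.Adj a b ↔ b = g a := fun a ha b =>
    ⟨(hm.2.2 _ (hg_m a ha)).2 b, fun h => h ▸ (hm.2.2 _ (hg_m a ha)).1⟩
  by_cases ha : a ∈ OmegaMinus m <;> by_cases hb : b ∈ OmegaMinus m
  · simp only [ha, hb, not_true, false_and, iff_self, or_false, iff_false]
    rw [hpend a ha]
    rintro rfl
    exact (g a).2 hb
  · simp only [ha, hb, not_true, false_and, iff_false, not_false_eq_true, true_and, false_or,
      Subtype.ext_iff, hg_out b hb]
    rw [hpend a ha, eq_comm]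
  · simp only [ha, hb, not_false_eq_true, not_true, false_and, iff_true, true_and, false_or,
      Subtype.ext_iff, hg_out a ha]
    rw [G.adj_comm, hpend b hb]
  · simp only [ha, hb, not_false_eq_true, iff_self, not_true, false_and, or_false, true_and,
      hg_out a ha, hg_out b hb]

theorem adj_iff_adj_retraction_of_ne (htwin : ∀ p ∈ m, IsTwin G p.1 p.2)
    (hg_out : ∀ a ∉ OmegaMinus m, (g a : α) = a) (hg_m : ∀ a ∈ OmegaMinus m, (a, (g a : α)) ∈ m)
    (hab : g a ≠ g b) : G.Adj a b ↔ G.Adj (g a) (g b) := by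
  have step : ∀ a γ, γ ≠ a → γ ≠ (g a : α) → (G.Adj γ a ↔ G.Adj γ (g a)) := by
    intro a γ h1 h2
    by_cases ha : a ∈ OmegaMinus m
    · exact htwin _ (hg_m a ha) γ h1 h2
    · rw [hg_out a ha]
  have hba : b ≠ (g a : α) := fun h => hab (by rw [h, retraction_coe hg_out])
  calc G.Adj a b ↔ G.Adj b a := G.adj_comm a b
    _ ↔ G.Adj b (g a) := step a b (fun h => hab (h ▸ rfl)) hba
    _ ↔ G.Adj (g a) b := G.adj_comm _ _
    _ ↔ G.Adj (g a) (g b) := step b _ hba.symm fun h => hab (Subtype.ext h)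

theorem IsTwinMatching.adj_iff (hm : IsTwinMatching G X m) (hadj : X.IsRelation (adjRel G))
    (hg_out : ∀ a ∉ OmegaMinus m, (g a : α) = a) (hg_m : ∀ a ∈ OmegaMinus m, (a, (g a : α)) ∈ m)
    (a b : α) :
    G.Adj a b ↔ (g a = g b ∧ ¬(a ∈ OmegaMinus m ↔ b ∈ OmegaMinus m) ∧ m ⊆ adjRel G) ∨
      (g a ≠ g b ∧ G.Adj (g a) (g b)) := by
  by_cases hab : g a = g b
  · simp only [hab, true_and, ne_eq, not_true, false_and, or_false]
    constructor
    · intro hGab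
      have hside : ¬(a ∈ OmegaMinus m ↔ b ∈ OmegaMinus m) := fun h =>
        hGab.ne (eq_of_retraction_eq hm.1 hg_out hg_m h hab)
      -- `m` is a basis relation of `X`, so either all or none of its pairs are edges
      refine ⟨hside, ?_⟩
      rcases mem_or_mem_of_retraction_eq hg_out hg_m hside hab with hmab | hmba
      · exact isRelation_iff.1 hadj _ hGab m hm.1.1 hmab
      · exact isRelation_iff.1 hadj _ hGab.symm m hm.1.1 hmba
    · rintro ⟨hside, hmG⟩
      rcases mem_or_mem_of_retraction_eq hg_out hg_m hside hab with hmab | hmba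
      · exact hmG hmab
      · exact (hmG hmba).symm
  · simp only [hab, false_and, ne_eq, not_false_eq_true, true_and, false_or]
    exact adj_iff_adj_retraction_of_ne hm.2.2 hg_out hg_m hab

end Retraction

theorem eq_setOf_retraction_mem {α : Type*} {m : Set (α × α)} {g : α → ↥(OmegaMinus m)ᶜ}
    (hg_out : ∀ a ∉ OmegaMinus m, (g a : α) = a) {Φ : Set α} (hΦ : Disjoint Φ (OmegaMinus m)) :
    Φ = {a | (a ∈ OmegaMinus m) = False ∧ g a ∈ restrictSet (OmegaMinus m) Φ} := by
  ext a
  constructor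
  · intro ha
    have haΔ := disjoint_left.1 hΦ ha
    exact ⟨eq_false haΔ, show (g a : α) ∈ Φ by rwa [hg_out a haΔ]⟩
  · rintro ⟨haΔ, hga⟩
    exact hg_out a (of_eq_false haΔ) ▸ hga

open CoherentConfiguration in
/-- The lift is the pullback of `Y` along the retraction onto `Ω₋(m)ᶜ` sending each point of
`Ω₋(m)` to its `m`-partner, labelled by membership in `Ω₋(m)`; that `m` is pendant or twin is what
makes adjacency in `G` depend only on these labels and the image pair. -/
theorem exists_lift {α : Type*} [Finite α] {G : SimpleGraph α} {X : CoherentConfiguration α}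
    {m : Set (α × α)} (hm : IsPendantMatching G X m ∨ IsTwinMatching G X m)
    (hadj : X.IsRelation (adjRel G)) {Y : CoherentConfiguration ↥(OmegaMinus m)ᶜ}
    (hYadj : Y.IsRelation (adjRel (G.induce (OmegaMinus m)ᶜ)))
    (hYfib : ∀ Φ, X.IsFiber Φ → Φ ≠ OmegaMinus m →
      Y.IsRelation (diagRel (restrictSet (OmegaMinus m) Φ))) :
    ∃ W : CoherentConfiguration α, W.IsRelation (adjRel G) ∧
      (∀ Φ, X.IsFiber Φ → W.IsRelation (diagRel Φ)) ∧
      ∀ R, W.IsRelation R → Y.IsRelation (restrictRel (OmegaMinus m) R) := by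
  obtain ⟨hmatch, hne⟩ : IsMatchingCC X m ∧ OmegaMinus m ≠ OmegaPlus m :=
    hm.elim (fun h => ⟨h.1, h.2.1⟩) fun h => ⟨h.1, h.2.1⟩
  have hΔ := isFiber_omegaMinus hmatch.1
  obtain ⟨g, hg_out, hg_m⟩ := exists_retraction (disjoint_omegaMinus_omegaPlus hmatch.1 hne)
  have hinj : ∀ a b, (a ∈ OmegaMinus m) = (b ∈ OmegaMinus m) → g a = g b → a = b :=
    fun a b h => eq_of_retraction_eq hmatch hg_out hg_m (Iff.of_eq h)
  have himage : ∀ i, Y.IsRelation (diagRel (g '' {a | (a ∈ OmegaMinus m) = i})) := by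
    intro i
    by_cases hi : i
    · simpa [hi, image_retraction_omegaMinus hmatch hg_m] using
        hYfib _ (isFiber_omegaPlus hmatch.1) hne.symm
    · simpa [hi, ← compl_def, image_retraction_compl hg_out] using Y.isRelation_diagRel_univ
  refine ⟨Y.pullback g (· ∈ OmegaMinus m) hinj himage, ?_, fun Φ hΦ => ?_,
    fun R hR => isRelation_preimage_of_isRelation_pullback (retraction_coe hg_out)
      (fun c => eq_false c.2) hR⟩
  · rcases hm with hpend | htwin
    · exact isRelation_pullback_of_iff hYadj (fun i j e x => (¬i ∧ ¬j ∧ x) ∨ (¬(i ↔ j) ∧ e))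
        fun p => hpend.adj_iff hg_out hg_m p.1 p.2
    · exact isRelation_pullback_of_iff hYadj
        (fun i j e x => (e ∧ ¬(i ↔ j) ∧ m ⊆ adjRel G) ∨ (¬e ∧ x))
        fun p => htwin.adj_iff hadj hg_out hg_m p.1 p.2
  · by_cases hΦΔ : Φ = OmegaMinus m
    · convert isRelation_pullback_diagRel Y.isRelation_diagRel_univ True
      ext
      simp [hΦΔ]
    · rw [eq_setOf_retraction_mem hg_out (disjoint_left.2 fun a ha ha' =>
        hΦΔ (hΦ.eq_of_mem hΔ ha ha'))]
      exact isRelation_pullback_diagRel (hYfib Φ hΦ hΦΔ) False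

/-- Removing a matching: if `m` is a pendant or twin matching of
`X = WL(G)_π` and `Δ = Ω₋(m)`, then `WL(G)_π ∖ Δ = WL(G ∖ Δ)_{π ∖ {Δ}}` and
`π ∖ {Δ}` is a correct partition of `G ∖ Δ`. -/
theorem stmt_12 {Ω : Type u} [Fintype Ω] (G : SimpleGraph Ω)
    (π : Set (Set Ω)) (X : CoherentConfiguration Ω)
    (hWL : IsWLPart G π X) (hcorrect : π = {Δ | X.IsFiber Δ})
    (m : Set (Ω × Ω)) (hm : IsPendantMatching G X m ∨ IsTwinMatching G X m)
    (Δ : Set Ω) (hΔ : Δ = OmegaMinus m)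
    (Y : CoherentConfiguration ↥(Δᶜ))
    (hY : IsWLPart (G.induce (Δᶜ : Set Ω)) ((fun Γ => restrictSet Δ Γ) '' (π \ {Δ})) Y) :
    Y.S = {t | t.Nonempty ∧ ∃ s ∈ X.S, t = restrictRel Δ s} ∧
      (fun Γ => restrictSet Δ Γ) '' (π \ {Δ}) = {Γ | Y.IsFiber Γ} := by
  subst hΔ hcorrect
  have hΔ : X.IsFiber (OmegaMinus m) :=
    CoherentConfiguration.isFiber_omegaMinus (hm.elim (·.1.1) (·.1.1))
  have hYZ : CCle Y (X.restrict _ hΔ.isRelation) := by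
    refine hY.2.2 _ (hWL.1.restrict _) ?_
    rintro _ ⟨Φ, ⟨hΦ, -⟩, rfl⟩
    rw [diagRel_restrictSet]
    exact hΦ.isRelation.restrict _
  obtain ⟨W, hWadj, hWfib, hWY⟩ :=
    exists_lift hm hWL.1 hY.1 fun Φ hΦ hΦΔ => hY.2.1 _ ⟨Φ, ⟨hΦ, hΦΔ⟩, rfl⟩
  have hXW : CCle X W := hWL.2.2 W hWadj hWfib
  have hS : Y.S = (X.restrict _ hΔ.isRelation).S := by
    refine CoherentConfiguration.S_eq_of_forall_isRelation
      (fun s hs => hYZ s (CoherentConfiguration.isRelation_of_mem_S hs)) ?_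
    rw [CoherentConfiguration.restrict_S]
    rintro _ ⟨-, s, hs, rfl⟩
    exact hWY s (hXW s (CoherentConfiguration.isRelation_of_mem_S hs))
  refine ⟨hS.trans (CoherentConfiguration.restrict_S _), ?_⟩
  rw [← CoherentConfiguration.setOf_isFiber_restrict hΔ]
  simp only [CoherentConfiguration.IsFiber, hS]
end
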